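/- For every nonnegative integer n, ζ(2n+2) = ((-1)^n / ((1 - (1/2)^{2n+2}) (2n+1)!)) (1/2) (π/2)^{2n+2} Σ_{l=0}^{n} C(2n, 2l) E_{2l} E_{2n-2l}, where ζ is the Riemann zeta function, E_m denotes the m-th Euler number, and C(a, b) is the binomial coefficient. -/

import Mathlib

open Real

open Finset

/-- The `n`-th Euler number, defined as the `n`-th iterated derivative at `0` of
`x ↦ sech x = 1 / cosh x`, i.e. via `sech x = ∑ E_n xⁿ/n!`. -/
noncomputable def eulerNumber (n : ℕ) : ℝ :=
  iteratedDeriv n (fun x : ℝ => 1 / Real.cosh x) 0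


lemma sum_pascal (a b : ℕ → ℝ) (n : ℕ) :
    (∑ k ∈ range (n + 1), (n.choose k : ℝ) * a (k + 1) * b (n - k))
      + ∑ k ∈ range (n + 1), (n.choose k : ℝ) * a k * b (n - k + 1)
    = ∑ k ∈ range (n + 2), ((n + 1).choose k : ℝ) * a k * b (n + 1 - k) := by
  have h2 : (∑ k ∈ range (n + 1), (n.choose (k + 1) : ℝ) * a (k + 1) * b (n - k))
      + a 0 * b (n + 1)
      = ∑ k ∈ range (n + 1), (n.choose k : ℝ) * a k * b (n - k + 1) := by
    calc (∑ k ∈ range (n + 1), (n.choose (k + 1) : ℝ) * a (k + 1) * b (n - k)) + a 0 * b (n + 1)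
        = ∑ k ∈ range (n + 2), (n.choose k : ℝ) * a k * b (n + 1 - k) := by
          rw [Finset.sum_range_succ' (fun k => (n.choose k : ℝ) * a k * b (n + 1 - k)) (n + 1)]
          simp [Nat.succ_sub_succ]
      _ = ∑ k ∈ range (n + 1), (n.choose k : ℝ) * a k * b (n + 1 - k) := by
          rw [Finset.sum_range_succ]
          simp [Nat.choose_succ_self]
      _ = _ := by
          refine Finset.sum_congr rfl fun k hk => ?_
          rw [mem_range] at hk
          congr 2
          omega
  calc (∑ k ∈ range (n + 1), (n.choose k : ℝ) * a (k + 1) * b (n - k))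
      + ∑ k ∈ range (n + 1), (n.choose k : ℝ) * a k * b (n - k + 1)
      = (∑ k ∈ range (n + 1), (n.choose k : ℝ) * a (k + 1) * b (n - k))
        + ((∑ k ∈ range (n + 1), (n.choose (k + 1) : ℝ) * a (k + 1) * b (n - k))
          + a 0 * b (n + 1)) := by rw [h2]
    _ = (∑ k ∈ range (n + 1), (((n + 1).choose (k + 1) : ℝ)) * a (k + 1) * b (n - k))
        + a 0 * b (n + 1) := by
          rw [← add_assoc, ← Finset.sum_add_distrib]
          congr 1
          refine Finset.sum_congr rfl fun k hk => ?_
          rw [Nat.choose_succ_succ]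
          push_cast; ring
    _ = ∑ k ∈ range (n + 2), ((n + 1).choose k : ℝ) * a k * b (n + 1 - k) := by
          rw [Finset.sum_range_succ' (fun k => ((n + 1).choose k : ℝ) * a k * b (n + 1 - k)) (n + 1)]
          simp [Nat.succ_sub_succ]



lemma my_iteratedDeriv_mul (n : ℕ) :
    ∀ (f g : ℝ → ℝ), ContDiff ℝ (⊤ : ℕ∞) f → ContDiff ℝ (⊤ : ℕ∞) g →
    iteratedDeriv n (fun y => f y * g y)
      = fun x => ∑ k ∈ Finset.range (n + 1),
          (n.choose k : ℝ) * iteratedDeriv k f x * iteratedDeriv (n - k) g x := by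
  induction n with
  | zero => intro f g hf hg; simp
  | succ n ih =>
    intro f g hf hg
    have hf' : Differentiable ℝ f := hf.differentiable (by simp)
    have hg' : Differentiable ℝ g := hg.differentiable (by simp)
    have hdf : ContDiff ℝ (⊤ : ℕ∞) (deriv f) := (contDiff_infty_iff_deriv.mp hf).2
    have hdg : ContDiff ℝ (⊤ : ℕ∞) (deriv g) := (contDiff_infty_iff_deriv.mp hg).2
    have hstep : deriv (fun y => f y * g y)
        = fun y => deriv f y * g y + f y * deriv g y := by
      funext y
      exact deriv_mul (hf' y) (hg' y)
    rw [iteratedDeriv_succ', hstep]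
    have hadd : iteratedDeriv n (fun y => deriv f y * g y + f y * deriv g y)
        = fun x => iteratedDeriv n (fun y => deriv f y * g y) x
            + iteratedDeriv n (fun y => f y * deriv g y) x := by
      funext x
      have h1 : ContDiff ℝ (n : ℕ∞) (fun y => deriv f y * g y) :=
        ((hdf.mul hg).of_le (by exact_mod_cast le_top))
      have h2 : ContDiff ℝ (n : ℕ∞) (fun y => f y * deriv g y) :=
        ((hf.mul hdg).of_le (by exact_mod_cast le_top))
      have := iteratedFDeriv_add_apply (𝕜 := ℝ) h1.contDiffAt h2.contDiffAt (x := x)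
      simp only [iteratedDeriv]
      rw [show (fun y => deriv f y * g y + f y * deriv g y)
          = (fun y => deriv f y * g y) + (fun y => f y * deriv g y) from rfl, this]
      simp
    rw [hadd]
    funext x
    simp only [ih (deriv f) g hdf hg, ih f (deriv g) hf hdg]
    simp only [← iteratedDeriv_succ']
    exact sum_pascal (fun k => iteratedDeriv k f x) (fun k => iteratedDeriv k g x) n


lemma contDiff_tanh : ContDiff ℝ (⊤:ℕ∞) Real.tanh := by
  have h : Real.tanh = fun x => Real.sinh x / Real.cosh x :=
    funext fun x => Real.tanh_eq_sinh_div_cosh x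
  rw [h]
  exact Real.contDiff_sinh.div Real.contDiff_cosh fun x => (Real.cosh_pos x).ne'

lemma contDiff_sech : ContDiff ℝ (⊤:ℕ∞) (fun x : ℝ => 1 / Real.cosh x) :=
  contDiff_const.div Real.contDiff_cosh fun x => (Real.cosh_pos x).ne'

lemma deriv_tanh : deriv Real.tanh = fun x => (1 / Real.cosh x) * (1 / Real.cosh x) := by
  funext x
  have h : Real.tanh = fun x => Real.sinh x / Real.cosh x :=
    funext fun x => Real.tanh_eq_sinh_div_cosh x
  have hd : HasDerivAt Real.tanh
      ((Real.cosh x * Real.cosh x - Real.sinh x * Real.sinh x) / (Real.cosh x) ^ 2) x := by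
    rw [h]
    exact (Real.hasDerivAt_sinh x).div (Real.hasDerivAt_cosh x) (Real.cosh_pos x).ne'
  rw [hd.deriv]
  have h2 : Real.cosh x ^ 2 - Real.sinh x ^ 2 = 1 := Real.cosh_sq_sub_sinh_sq x
  have h3 : Real.cosh x ≠ 0 := (Real.cosh_pos x).ne'
  field_simp
  nlinarith [h2]

lemma contDiff_exp2 : ContDiff ℝ (⊤:ℕ∞) (fun x : ℝ => Real.exp (2 * x)) :=
  Real.contDiff_exp.comp (contDiff_const.mul contDiff_id)

lemma iteratedDeriv_exp2 (n : ℕ) (x : ℝ) :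
    iteratedDeriv n (fun x : ℝ => Real.exp (2 * x)) x = 2 ^ n * Real.exp (2 * x) := by
  have := iteratedDeriv_comp_const_mul (n := n) (f := Real.exp) Real.contDiff_exp 2
  rw [this, iteratedDeriv_eq_iterate, Real.iter_deriv_exp]

lemma iteratedDeriv_add_const (n : ℕ) (f : ℝ → ℝ) (c : ℝ) (x : ℝ) :
    iteratedDeriv n (fun y => f y + c) x
      = iteratedDeriv n f x + if n = 0 then c else 0 := by
  cases n with
  | zero => simp
  | succ n =>
    rw [iteratedDeriv_succ', iteratedDeriv_succ']
    have : deriv (fun y => f y + c) = deriv f := by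
      funext y
      exact deriv_add_const c
    rw [this]
    simp

lemma tanh_mul_id : ∀ x : ℝ, Real.tanh x * (Real.exp (2 * x) + 1) = Real.exp (2 * x) - 1 := by
  intro x
  rw [Real.tanh_eq_sinh_div_cosh, Real.sinh_eq, Real.cosh_eq]
  have h : Real.exp x ≠ 0 := Real.exp_ne_zero x
  have h2 : Real.exp x * Real.exp x = Real.exp (2 * x) := by
    rw [← Real.exp_add]; ring_nf
  have h3 : Real.exp x * Real.exp (-x) = 1 := by
    rw [← Real.exp_add]; simp
  have hc : Real.exp x + Real.exp (-x) ≠ 0 := by positivity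
  have h4 : Real.exp (-x) * Real.exp (2 * x) = Real.exp x := by
    rw [← Real.exp_add]; ring_nf
  field_simp
  rw [mul_comm x 2]
  linear_combination (-2 : ℝ) * h4


noncomputable def Bps : PowerSeries ℝ := bernoulliPowerSeries ℝ

lemma hB2 : (PowerSeries.rescale (2:ℝ) Bps) * (PowerSeries.rescale (2:ℝ) (PowerSeries.exp ℝ) - 1) = 2 * PowerSeries.X := by
  have := congrArg (PowerSeries.rescale (2:ℝ)) (bernoulliPowerSeries_mul_exp_sub_one ℝ)
  rw [map_mul, map_sub, map_one, PowerSeries.rescale_X] at this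
  simpa [Bps, Polynomial.C_eq_natCast, map_ofNat] using this

lemma hB4 : (PowerSeries.rescale (4:ℝ) Bps) * (PowerSeries.rescale (4:ℝ) (PowerSeries.exp ℝ) - 1) = 4 * PowerSeries.X := by
  have := congrArg (PowerSeries.rescale (4:ℝ)) (bernoulliPowerSeries_mul_exp_sub_one ℝ)
  rw [map_mul, map_sub, map_one, PowerSeries.rescale_X] at this
  simpa [Bps, map_ofNat] using this

lemma hEE : PowerSeries.rescale (2:ℝ) (PowerSeries.exp ℝ) * PowerSeries.rescale (2:ℝ) (PowerSeries.exp ℝ) = PowerSeries.rescale (4:ℝ) (PowerSeries.exp ℝ) := by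
  rw [PowerSeries.exp_mul_exp_eq_exp_add]; norm_num

lemma hu_ne : (PowerSeries.rescale (2:ℝ) (PowerSeries.exp ℝ) - 1) ≠ 0 := by
  intro h
  have := congrArg (PowerSeries.coeff 1) h
  simp [PowerSeries.coeff_rescale, PowerSeries.coeff_exp] at this

lemma hu1_ne : (PowerSeries.rescale (2:ℝ) (PowerSeries.exp ℝ) + 1) ≠ 0 := by
  intro h
  have := congrArg (PowerSeries.coeff 0) h
  rw [map_add, PowerSeries.coeff_rescale] at this
  simp [PowerSeries.coeff_exp] at this

-- B4 * (u+1) = 2 * B2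
lemma hB4u : (PowerSeries.rescale (4:ℝ) Bps) * (PowerSeries.rescale (2:ℝ) (PowerSeries.exp ℝ) + 1) = 2 * PowerSeries.rescale (2:ℝ) Bps := by
  have h : ((PowerSeries.rescale (4:ℝ) Bps) * (PowerSeries.rescale (2:ℝ) (PowerSeries.exp ℝ) + 1)) * (PowerSeries.rescale (2:ℝ) (PowerSeries.exp ℝ) - 1)
      = (2 * PowerSeries.rescale (2:ℝ) Bps) * (PowerSeries.rescale (2:ℝ) (PowerSeries.exp ℝ) - 1) := by
    have expand : (PowerSeries.rescale (2:ℝ) (PowerSeries.exp ℝ) + 1) * (PowerSeries.rescale (2:ℝ) (PowerSeries.exp ℝ) - 1)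
        = PowerSeries.rescale (4:ℝ) (PowerSeries.exp ℝ) - 1 := by
      ring_nf
      rw [← hEE]; ring
    calc ((PowerSeries.rescale (4:ℝ) Bps) * (PowerSeries.rescale (2:ℝ) (PowerSeries.exp ℝ) + 1)) * (PowerSeries.rescale (2:ℝ) (PowerSeries.exp ℝ) - 1)
        = (PowerSeries.rescale (4:ℝ) Bps) * ((PowerSeries.rescale (2:ℝ) (PowerSeries.exp ℝ) + 1) * (PowerSeries.rescale (2:ℝ) (PowerSeries.exp ℝ) - 1)) := by ring
      _ = (PowerSeries.rescale (4:ℝ) Bps) * (PowerSeries.rescale (4:ℝ) (PowerSeries.exp ℝ) - 1) := by rw [expand]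
      _ = 4 * PowerSeries.X := hB4
      _ = 2 * (2 * PowerSeries.X) := by ring
      _ = 2 * ((PowerSeries.rescale (2:ℝ) Bps) * (PowerSeries.rescale (2:ℝ) (PowerSeries.exp ℝ) - 1)) := by rw [hB2]
      _ = (2 * PowerSeries.rescale (2:ℝ) Bps) * (PowerSeries.rescale (2:ℝ) (PowerSeries.exp ℝ) - 1) := by ring
  exact mul_right_cancel₀ hu_ne h

-- step B: (X - B2 + B4) * (u + 1) = X * (u - 1)
lemma stepB : (PowerSeries.X - PowerSeries.rescale (2:ℝ) Bps + PowerSeries.rescale (4:ℝ) Bps) * (PowerSeries.rescale (2:ℝ) (PowerSeries.exp ℝ) + 1)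
    = PowerSeries.X * (PowerSeries.rescale (2:ℝ) (PowerSeries.exp ℝ) - 1) := by
  have h2 : (PowerSeries.rescale (2:ℝ) Bps) * (PowerSeries.rescale (2:ℝ) (PowerSeries.exp ℝ) + 1)
      = 2 * PowerSeries.X + 2 * PowerSeries.rescale (2:ℝ) Bps := by
    have : (PowerSeries.rescale (2:ℝ) Bps) * (PowerSeries.rescale (2:ℝ) (PowerSeries.exp ℝ) + 1)
        = (PowerSeries.rescale (2:ℝ) Bps) * (PowerSeries.rescale (2:ℝ) (PowerSeries.exp ℝ) - 1) + 2 * PowerSeries.rescale (2:ℝ) Bps := by ring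
    rw [this, hB2]
  calc (PowerSeries.X - PowerSeries.rescale (2:ℝ) Bps + PowerSeries.rescale (4:ℝ) Bps) * (PowerSeries.rescale (2:ℝ) (PowerSeries.exp ℝ) + 1)
      = PowerSeries.X * (PowerSeries.rescale (2:ℝ) (PowerSeries.exp ℝ) + 1)
        - (PowerSeries.rescale (2:ℝ) Bps) * (PowerSeries.rescale (2:ℝ) (PowerSeries.exp ℝ) + 1)
        + (PowerSeries.rescale (4:ℝ) Bps) * (PowerSeries.rescale (2:ℝ) (PowerSeries.exp ℝ) + 1) := by ring
    _ = PowerSeries.X * (PowerSeries.rescale (2:ℝ) (PowerSeries.exp ℝ) + 1)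
        - (2 * PowerSeries.X + 2 * PowerSeries.rescale (2:ℝ) Bps) + 2 * PowerSeries.rescale (2:ℝ) Bps := by
          rw [h2, hB4u]
    _ = PowerSeries.X * (PowerSeries.rescale (2:ℝ) (PowerSeries.exp ℝ) - 1) := by ring

noncomputable def Tps : PowerSeries ℝ :=
  PowerSeries.mk fun k => iteratedDeriv k Real.tanh 0 / (k.factorial : ℝ)

lemma stepA : Tps * (PowerSeries.rescale (2:ℝ) (PowerSeries.exp ℝ) + 1) = PowerSeries.rescale (2:ℝ) (PowerSeries.exp ℝ) - 1 := by
  have hU : ContDiff ℝ (⊤:ℕ∞) (fun y : ℝ => Real.exp (2 * y) + 1) :=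
    contDiff_exp2.add contDiff_const
  ext n
  rw [PowerSeries.coeff_mul, Finset.Nat.sum_antidiagonal_eq_sum_range_succ_mk]
  have hcoeffE : ∀ m : ℕ, (PowerSeries.coeff m) (PowerSeries.rescale (2:ℝ) (PowerSeries.exp ℝ))
      = 2 ^ m / (m.factorial : ℝ) := by
    intro m
    rw [PowerSeries.coeff_rescale, PowerSeries.coeff_exp, eq_ratCast, Rat.cast_div, Rat.cast_one]
    push_cast
    ring
  have hcoeffU : ∀ m : ℕ, (PowerSeries.coeff m) (PowerSeries.rescale (2:ℝ) (PowerSeries.exp ℝ) + 1)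
      = 2 ^ m / (m.factorial : ℝ) + if m = 0 then 1 else 0 := by
    intro m
    rw [map_add, hcoeffE, PowerSeries.coeff_one]
  have hcoeffT : ∀ k : ℕ, (PowerSeries.coeff k) Tps
      = iteratedDeriv k Real.tanh 0 / (k.factorial : ℝ) := fun k => PowerSeries.coeff_mk k _
  -- Leibniz identity at 0
  have hL : ∑ k ∈ Finset.range (n + 1),
      (n.choose k : ℝ) * iteratedDeriv k Real.tanh 0 * (2 ^ (n - k) + if n - k = 0 then 1 else 0)
      = 2 ^ n + (if n = 0 then (-1 : ℝ) else 0) := by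
    have h1 := congrFun (my_iteratedDeriv_mul n Real.tanh (fun y : ℝ => Real.exp (2 * y) + 1)
      contDiff_tanh hU) 0
    have h2 : (fun y : ℝ => Real.tanh y * (Real.exp (2 * y) + 1))
        = fun y : ℝ => Real.exp (2 * y) + (-1 : ℝ) := by
      funext y
      rw [tanh_mul_id y]; ring
    rw [h2, iteratedDeriv_add_const] at h1
    rw [iteratedDeriv_exp2] at h1
    simp only [mul_zero, Real.exp_zero, mul_one] at h1
    rw [h1]
    refine Finset.sum_congr rfl fun k hk => ?_
    rw [iteratedDeriv_add_const, iteratedDeriv_exp2]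
    simp [Real.exp_zero]
  -- now convert
  have key : ∀ k ∈ Finset.range (n + 1),
      (PowerSeries.coeff k) Tps * (PowerSeries.coeff (n - k)) (PowerSeries.rescale (2:ℝ) (PowerSeries.exp ℝ) + 1)
      = ((n.choose k : ℝ) * iteratedDeriv k Real.tanh 0
          * (2 ^ (n - k) + if n - k = 0 then 1 else 0)) / (n.factorial : ℝ) := by
    intro k hk
    rw [Finset.mem_range] at hk
    have hkn : k ≤ n := by omega
    have hck : ((n.choose k : ℝ)) * (k.factorial : ℝ) * ((n - k).factorial : ℝ)
        = (n.factorial : ℝ) := by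
      exact_mod_cast Nat.choose_mul_factorial_mul_factorial hkn
    rw [hcoeffT, hcoeffU]
    have hkf : (k.factorial : ℝ) ≠ 0 := Nat.cast_ne_zero.mpr (Nat.factorial_ne_zero k)
    have hnkf : ((n - k).factorial : ℝ) ≠ 0 := Nat.cast_ne_zero.mpr (Nat.factorial_ne_zero _)
    have hnf : (n.factorial : ℝ) ≠ 0 := Nat.cast_ne_zero.mpr (Nat.factorial_ne_zero n)
    by_cases h0 : n - k = 0
    · have hkn' : k = n := by omega
      subst hkn'
      simp only [h0, if_pos, pow_zero, Nat.factorial_zero, Nat.cast_one, Nat.choose_self,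
        div_one]
      field_simp
    · simp only [if_neg h0, add_zero]
      have hcn : ((n.choose k : ℕ) : ℝ) ≠ 0 := by
        exact_mod_cast (Nat.choose_pos hkn).ne'
      rw [div_mul_div_comm, ← hck, div_eq_div_iff (by positivity) (by positivity)]
      ring
  rw [Finset.sum_congr rfl key, ← Finset.sum_div, hL]
  rw [map_sub, hcoeffE n, PowerSeries.coeff_one]
  have hnf : (n.factorial : ℝ) ≠ 0 := Nat.cast_ne_zero.mpr (Nat.factorial_ne_zero n)
  by_cases hn : n = 0
  · subst hn; norm_num
  · simp only [if_neg hn]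
    field_simp
    simp




lemma keyXT : PowerSeries.X * Tps = PowerSeries.X - PowerSeries.rescale (2:ℝ) Bps + PowerSeries.rescale (4:ℝ) Bps := by
  have h : (PowerSeries.X * Tps) * (PowerSeries.rescale (2:ℝ) (PowerSeries.exp ℝ) + 1)
      = (PowerSeries.X - PowerSeries.rescale (2:ℝ) Bps + PowerSeries.rescale (4:ℝ) Bps)
          * (PowerSeries.rescale (2:ℝ) (PowerSeries.exp ℝ) + 1) := by
    rw [stepB, mul_assoc, stepA]
  exact mul_right_cancel₀ hu1_ne h

lemma tanh_deriv_bernoulli (n : ℕ) :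
    iteratedDeriv (2 * n + 1) Real.tanh 0 * ((2 * n + 2).factorial : ℝ)
      = (4 ^ (2 * n + 2) - 2 ^ (2 * n + 2)) * ((bernoulli (2 * n + 2) : ℚ) : ℝ)
          * ((2 * n + 1).factorial : ℝ) := by
  have h := congrArg (PowerSeries.coeff (2 * n + 2)) keyXT
  rw [PowerSeries.coeff_succ_X_mul] at h
  rw [map_add, map_sub] at h
  rw [PowerSeries.coeff_X] at h
  have hB : ∀ c : ℝ, (PowerSeries.coeff (2 * n + 2)) (PowerSeries.rescale c Bps)
      = c ^ (2 * n + 2) * (((bernoulli (2 * n + 2) : ℚ) : ℝ) / ((2 * n + 2).factorial : ℝ)) := by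
    intro c
    rw [PowerSeries.coeff_rescale]
    congr 1
    show (PowerSeries.coeff (2 * n + 2)) (bernoulliPowerSeries ℝ) = _
    rw [bernoulliPowerSeries, PowerSeries.coeff_mk, eq_ratCast, Rat.cast_div]
    push_cast
    ring
  rw [hB, hB] at h
  simp only [Tps, PowerSeries.coeff_mk] at h
  simp only [if_neg (by omega : ¬(2 * n + 2) = 1), zero_sub] at h
  have h1 : ((2 * n + 1).factorial : ℝ) ≠ 0 := Nat.cast_ne_zero.mpr (Nat.factorial_ne_zero _)
  have h2 : ((2 * n + 2).factorial : ℝ) ≠ 0 := Nat.cast_ne_zero.mpr (Nat.factorial_ne_zero _)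
  field_simp at h
  apply mul_right_cancel₀ h2
  linear_combination ((2 * n + 2).factorial : ℝ) * h

lemma eulerNumber_odd (m : ℕ) (hm : Odd m) : eulerNumber m = 0 := by
  have hsymm : (fun x : ℝ => 1 / Real.cosh x) = fun x : ℝ => 1 / Real.cosh (-x) := by
    funext x; rw [Real.cosh_neg]
  have h := iteratedDeriv_comp_neg m (fun y : ℝ => 1 / Real.cosh y) 0
  rw [← hsymm, neg_zero] at h
  rw [hm.neg_one_pow] at h
  have : eulerNumber m = -eulerNumber m := by
    simpa [eulerNumber] using h
  linarith

lemma even_odd_split (a : ℕ → ℝ) (n : ℕ) :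
    ∑ k ∈ range (2 * n + 1), a k
      = ∑ l ∈ range (n + 1), a (2 * l) + ∑ l ∈ range n, a (2 * l + 1) := by
  induction n with
  | zero => simp
  | succ n ih =>
    have e1 : 2 * (n + 1) + 1 = (2 * n + 1) + 1 + 1 := by ring
    rw [e1, Finset.sum_range_succ, Finset.sum_range_succ, ih,
      Finset.sum_range_succ (fun l => a (2 * l)) (n + 1),
      Finset.sum_range_succ (fun l => a (2 * l + 1)) n]
    have e2 : 2 * n + 1 + 1 = 2 * (n + 1) := by ring
    rw [e2]
    ring

lemma euler_sum_eq (n : ℕ) :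
    ∑ l ∈ range (n + 1),
        (Nat.choose (2 * n) (2 * l) : ℝ) * eulerNumber (2 * l) * eulerNumber (2 * n - 2 * l)
      = iteratedDeriv (2 * n + 1) Real.tanh 0 := by
  simp only [eulerNumber]
  rw [iteratedDeriv_succ', deriv_tanh]
  have h := congrFun (my_iteratedDeriv_mul (2 * n) (fun x : ℝ => 1 / Real.cosh x)
    (fun x : ℝ => 1 / Real.cosh x) contDiff_sech contDiff_sech) 0
  rw [h]
  rw [even_odd_split (fun k => ((2 * n).choose k : ℝ)
    * iteratedDeriv k (fun x : ℝ => 1 / Real.cosh x) 0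
    * iteratedDeriv (2 * n - k) (fun x : ℝ => 1 / Real.cosh x) 0) n]
  have hodd : ∑ l ∈ range n, ((2 * n).choose (2 * l + 1) : ℝ)
      * iteratedDeriv (2 * l + 1) (fun x : ℝ => 1 / Real.cosh x) 0
      * iteratedDeriv (2 * n - (2 * l + 1)) (fun x : ℝ => 1 / Real.cosh x) 0 = 0 := by
    refine Finset.sum_eq_zero fun l hl => ?_
    have h0 : iteratedDeriv (2 * l + 1) (fun x : ℝ => 1 / Real.cosh x) 0 = 0 := by
      have := eulerNumber_odd (2 * l + 1) ⟨l, by ring⟩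
      simpa [eulerNumber] using this
    rw [h0]
    ring
  rw [hodd, add_zero]

lemma key_alg (a c P b d F q : ℂ) (hq : q ≠ 0) (hF : F ≠ 0) (hc : c ≠ 0)
    (hden : (1 - 1/(2*q)) ≠ 0)
    (hd : d * (c * F) = ((2*q)*(2*q) - 2*q) * b * F) :
    a * q * P * b / (c * F) = a / ((1 - 1/(2*q)) * F) * (1/2) * (P/(2*q)) * d := by
  have h2q : (2*q : ℂ) ≠ 0 := mul_ne_zero two_ne_zero hq
  have hden' : (2*q - 1 : ℂ) ≠ 0 := by
    intro h
    apply hden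
    field_simp
    linear_combination h
  field_simp at hd ⊢
  linear_combination (-a*P) * hd

/-- `ζ(2n+2) = ((-1)^n/((1-(1/2)^{2n+2})(2n+1)!)) (1/2) (π/2)^{2n+2}
  ∑_{l=0}^n C(2n,2l) E_{2l} E_{2n-2l}`. -/
theorem zeta_even_eq_euler (n : ℕ) :
    riemannZeta (2 * n + 2)
      = ((-1) ^ n / ((1 - (1 / 2) ^ (2 * n + 2)) * (Nat.factorial (2 * n + 1) : ℂ))) * (1 / 2) *
          ((π : ℂ) / 2) ^ (2 * n + 2) *
        ∑ l ∈ Finset.range (n + 1),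
          (Nat.choose (2 * n) (2 * l) : ℂ) * (eulerNumber (2 * l) : ℂ) *
            (eulerNumber (2 * n - 2 * l) : ℂ) := by
  have harg : (2 * (n : ℂ) + 2) = 2 * ((n + 1 : ℕ) : ℂ) := by push_cast; ring
  rw [harg, riemannZeta_two_mul_nat (by omega : n + 1 ≠ 0)]
  have hsum : (∑ l ∈ Finset.range (n + 1),
      (Nat.choose (2 * n) (2 * l) : ℂ) * (eulerNumber (2 * l) : ℂ)
        * (eulerNumber (2 * n - 2 * l) : ℂ))
      = ((iteratedDeriv (2 * n + 1) Real.tanh 0 : ℝ) : ℂ) := by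
    rw [← euler_sum_eq n]
    push_cast
    rfl
  rw [hsum]
  have hdC : ((iteratedDeriv (2 * n + 1) Real.tanh 0 : ℝ) : ℂ) * ((2 * n + 2).factorial : ℂ)
      = (4 ^ (2 * n + 2) - 2 ^ (2 * n + 2)) * ((bernoulli (2 * n + 2) : ℚ) : ℂ)
          * ((2 * n + 1).factorial : ℂ) := by
    have := congrArg (fun r : ℝ => (r : ℂ)) (tanh_deriv_bernoulli n)
    push_cast at this ⊢
    exact this
  have e1 : 2 * (n + 1) - 1 = 2 * n + 1 := by omega
  have e2 : 2 * (n + 1) = 2 * n + 2 := by ring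
  rw [e1, e2]
  have e3 : (-1 : ℂ) ^ (n + 1 + 1) = (-1) ^ n := by rw [pow_succ, pow_succ]; ring
  rw [e3]
  have h4 : (4 : ℂ) ^ (2 * n + 2) = 2 ^ (2 * n + 2) * 2 ^ (2 * n + 2) := by
    rw [← mul_pow]; norm_num
  rw [h4] at hdC
  have hf1 : ((2 * n + 1).factorial : ℂ) ≠ 0 := Nat.cast_ne_zero.mpr (Nat.factorial_ne_zero _)
  have hf2 : ((2 * n + 2).factorial : ℂ) ≠ 0 := Nat.cast_ne_zero.mpr (Nat.factorial_ne_zero _)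
  have hden : (1 - (1 / 2 : ℂ) ^ (2 * n + 2)) ≠ 0 := by
    have hR : (1 - (1 / 2 : ℝ) ^ (2 * n + 2)) ≠ 0 := by
      have hlt : (1 / 2 : ℝ) ^ (2 * n + 2) < 1 :=
        pow_lt_one₀ (by norm_num) (by norm_num) (by omega)
      intro hc
      rw [sub_eq_zero] at hc
      linarith
    have : (1 - (1 / 2 : ℂ) ^ (2 * n + 2)) = ((1 - (1 / 2 : ℝ) ^ (2 * n + 2) : ℝ) : ℂ) := by
      push_cast; ring
    rw [this]
    exact_mod_cast hR
  have h2ne : (2 : ℂ) ≠ 0 := two_ne_zero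
  have hpow2 : (2 : ℂ) ^ (2 * n + 2) ≠ 0 := pow_ne_zero _ h2ne
  have hfact : ((2 * n + 2).factorial : ℂ) = (2 * n + 2) * ((2 * n + 1).factorial : ℂ) := by
    rw [show (2 * n + 2) = (2 * n + 1) + 1 from rfl, Nat.factorial_succ]
    push_cast; ring
  rw [hfact] at hdC
  have hq2 : (2 : ℂ) ^ (2 * n + 2) = 2 * 2 ^ (2 * n + 1) := by rw [pow_succ]; ring
  rw [hq2] at hdC
  have hhalf : ((1 : ℂ) / 2) ^ (2 * n + 2) = 1 / (2 * 2 ^ (2 * n + 1)) := by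
    rw [div_pow, one_pow, hq2]
  have hpi2 : ((π : ℂ) / 2) ^ (2 * n + 2) = ((π : ℂ) ^ (2 * n + 2)) / (2 * 2 ^ (2 * n + 1)) := by
    rw [div_pow, hq2]
  rw [hhalf, hpi2, hfact]
  rw [hhalf] at hden
  have hc : (2 * (n : ℂ) + 2) ≠ 0 := by
    have h := Nat.cast_ne_zero (R := ℂ).mpr (show 2 * n + 2 ≠ 0 by omega)
    push_cast at h
    exact h
  exact key_alg ((-1) ^ n) (2 * (n : ℂ) + 2) ((π : ℂ) ^ (2 * n + 2))
    ((bernoulli (2 * n + 2) : ℚ) : ℂ) _ _ _ (pow_ne_zero _ two_ne_zero) hf1 hc hden hdC
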